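/- In the white component in initial state with f(t)=Empty and W to move, the white player has a strategy ensuring that the game in the component ends (in the sense that s becomes empty) with exactly one of x, y empty, and moreover W can choose which of x or y is empty. -/

import Mathlib

/-- A token type: white tokens are moved by player W, black by player B. -/
inductive Tok | White | Black
deriving DecidableEq

/-- A configuration places at most one token on each vertex. -/
abbrev Config (V : Type) := V → Option Tok

/-- The opponent of a player. -/
def other : Tok → Tok
  | Tok.White => Tok.Black
  | Tok.Black => Tok.White

/-- A legal node-blocking move by player `p`: pick a token of type `p` at `u`
and move it along an arc `(u,v)` to an unoccupied vertex `v`. -/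
def legalMove {V : Type} [DecidableEq V] (E : V → V → Prop) (p : Tok)
    (f f' : Config V) : Prop :=
  ∃ u v, E u v ∧ f u = some p ∧ f v = none ∧
    f' = Function.update (Function.update f u none) v (some p)

/-- The configuration obtained by moving a token of type `p` from `u` to `v`. -/
def mv {V : Type} [DecidableEq V] (f : Config V) (u v : V) (p : Tok) : Config V :=
  Function.update (Function.update f u none) v (some p)

/-- Vertices of the white variable component. -/
inductive WV | s | t | x | y | v1 | v2 | v3 | v4
deriving DecidableEq

instance : Fintype WV where
  elems := {WV.s, WV.t, WV.x, WV.y, WV.v1, WV.v2, WV.v3, WV.v4}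
  complete := fun a => by cases a <;> simp

/-- Arcs of the white variable component. -/
def WE : WV → WV → Prop := fun a b =>
  (a, b) ∈ ([(WV.s, WV.v1), (WV.v1, WV.v2), (WV.v2, WV.v3), (WV.v3, WV.t),
    (WV.v4, WV.t), (WV.v4, WV.v2), (WV.x, WV.v4), (WV.y, WV.v4)] : List (WV × WV))

/-- Initial state of the white component with the token at `t` removed. -/
def wInit : Config WV := fun v =>
  match v with
  | WV.s => some Tok.White | WV.v4 => some Tok.White
  | WV.x => some Tok.White | WV.y => some Tok.White
  | WV.v1 => some Tok.Black | WV.v2 => some Tok.Black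
  | WV.v3 => none | WV.t => none

/-- `Forces E p goal q f`: with player `q` to move in configuration `f`,
player `p` has a strategy forcing the play to reach a configuration
satisfying `goal` (the opponent always having at least one legal move
until the goal is reached). -/
inductive Forces {V : Type} [DecidableEq V] (E : V → V → Prop) (p : Tok)
    (goal : Config V → Prop) : Tok → Config V → Prop
  | base (q : Tok) (f : Config V) : goal f → Forces E p goal q f
  | mine (f f' : Config V) : legalMove E p f f' →
      Forces E p goal (other p) f' → Forces E p goal p f
  | theirs (f : Config V) : (∃ f', legalMove E (other p) f f') →
      (∀ f', legalMove E (other p) f f' → Forces E p goal p f') →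
      Forces E p goal (other p) f

/-! White vacates `v4` by `v4 → t`, after which Black's only move is `v2 → v3`. White then moves
the chosen one of `x`, `y` into `v4`, Black's only move is `v1 → v2`, and White empties `s` by
`s → v1`. -/

instance : ∀ a b, Decidable (WE a b) := fun a b => by unfold WE; infer_instance

section

variable {V : Type} [DecidableEq V] {E : V → V → Prop} {p : Tok} {goal : Config V → Prop}

theorem legalMove_mv {f : Config V} {u v : V} (h : E u v ∧ f u = some p ∧ f v = none) :
    legalMove E p f (mv f u v p) :=
  ⟨u, v, h.1, h.2.1, h.2.2, rfl⟩

theorem Forces.of_mv {f : Config V} (u v : V) (hmove : E u v ∧ f u = some p ∧ f v = none)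
    (h : Forces E p goal (other p) (mv f u v p)) : Forces E p goal p f :=
  .mine f _ (legalMove_mv hmove) h

theorem Forces.of_forced_reply {f : Config V} (u v : V)
    (hmove : E u v ∧ f u = some (other p) ∧ f v = none)
    (hforced : ∀ a b, E a b → f a = some (other p) → f b = none → a = u ∧ b = v)
    (h : Forces E p goal p (mv f u v (other p))) : Forces E p goal (other p) f := by
  refine .theirs f ⟨_, legalMove_mv hmove⟩ ?_
  rintro _ ⟨a, b, hab, ha, hb, rfl⟩
  obtain ⟨rfl, rfl⟩ := hforced a b hab ha hb
  exact h

end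

/-- in the white component in initial state (t empty, W to move),
W can force the game in the component to end (s empty) with exactly one of
x, y empty, and W can choose which one of x, y is empty. -/
theorem stmt_6 (z : WV) (hz : z = WV.x ∨ z = WV.y) :
    Forces WE Tok.White
      (fun g => g WV.s = none ∧ g z = none ∧
        ∀ z', (z' = WV.x ∨ z' = WV.y) → z' ≠ z → g z' ≠ none)
      Tok.White wInit := by
  refine Forces.of_mv WV.v4 WV.t ?_ <| Forces.of_forced_reply WV.v2 WV.v3 ?_ ?_ <|
    Forces.of_mv z WV.v4 ?_ <| Forces.of_forced_reply WV.v1 WV.v2 ?_ ?_ <|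
    Forces.of_mv WV.s WV.v1 ?_ <| .base _ _ ?_
  all_goals rcases hz with rfl | rfl <;> decide
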